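/- arXiv:1412.5237 — 3 statements merged into one kernel-verified Lean document; each statement's English description precedes it below -/
import Mathlib

section
/- For every twice continuously differentiable function v : [A,B] → ℂ, the intertwining relation B L v = L C v holds, i.e., for every y ∈ (A,B), with u(x) = ρ(l⁻¹(x)) v(l⁻¹(x)) and x = l(y), one has −u″(x) + Q(x) u(x) = −(ρ(y)/r(y)) · ( p(y) v″(y) + p′(y) v′(y) − q(y) v(y) ). Here B = −d²/dx² + Q(x) and C = −(1/r)(d/dy (p d/dy) − q). -/
/-!
Put `σ = (p r)^(-1/4)`, so that `ρ = σ⁻¹`, `l' = √(r/p) = (p σ²)⁻¹` and `u = (v/σ) ∘ l⁻¹`.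
Differentiating through `l⁻¹` gives `u' = (σ (p v') - (p σ') v) ∘ l⁻¹`, and by Lagrange's identity
`u'' = (p σ² (σ (p v')' - (p σ')' v)) ∘ l⁻¹`. Since `(p/r³)^(1/4) = p σ³`, the term `(p σ')' v` is
cancelled exactly by the second part of `Q u`, and what is left is `-(ρ/r) ((p v')' - q v)`
because `p σ³ = ρ/r`.
-/

open MeasureTheory Topology Filter Set

section InverseFunction

variable {f g : ℝ → ℝ} {A B : ℝ}

theorem mem_Ioo_of_rightInvOn (hg : MapsTo g (Icc (f A) (f B)) (Icc A B))
    (hfg : ∀ x ∈ Icc (f A) (f B), f (g x) = x) {x : ℝ} (hx : x ∈ Ioo (f A) (f B)) :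
    g x ∈ Ioo A B := by
  have hxI := Ioo_subset_Icc_self hx
  obtain ⟨hA, hB⟩ := hg hxI
  refine ⟨hA.lt_of_ne ?_, hB.lt_of_ne ?_⟩ <;> rintro hgx
  · exact hx.1.ne (by rw [hgx, hfg x hxI])
  · exact hx.2.ne' (by rw [← hgx, hfg x hxI])

theorem StrictMonoOn.monotoneOn_of_rightInvOn (hf : StrictMonoOn f (Icc A B))
    (hg : MapsTo g (Icc (f A) (f B)) (Icc A B)) (hfg : ∀ x ∈ Icc (f A) (f B), f (g x) = x) :
    MonotoneOn g (Icc (f A) (f B)) := by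
  intro x hx x' hx' hxx'
  by_contra! hlt
  have := hf (hg hx') (hg hx) hlt
  rw [hfg x hx, hfg x' hx'] at this
  exact hxx'.not_gt this

theorem StrictMonoOn.continuousAt_of_invOn (hf : StrictMonoOn f (Icc A B))
    (hg : MapsTo g (Icc (f A) (f B)) (Icc A B)) (hgf : ∀ y ∈ Icc A B, g (f y) = y)
    (hfg : ∀ x ∈ Icc (f A) (f B), f (g x) = x) {x : ℝ} (hx : x ∈ Ioo (f A) (f B)) :
    ContinuousAt g x := by
  have hgx := mem_Ioo_of_rightInvOn hg hfg hx
  refine continuousAt_of_monotoneOn_of_image_mem_nhds (hf.monotoneOn_of_rightInvOn hg hfg)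
    (Icc_mem_nhds hx.1 hx.2) (mem_of_superset (Icc_mem_nhds hgx.1 hgx.2) fun y hy => ?_)
  have hAB : A ≤ B := hy.1.trans hy.2
  exact ⟨f y, ⟨hf.monotoneOn (left_mem_Icc.2 hAB) hy hy.1,
    hf.monotoneOn hy (right_mem_Icc.2 hAB) hy.2⟩, hgf y hy⟩

theorem StrictMonoOn.eventually_hasDerivAt_of_invOn (hf : StrictMonoOn f (Icc A B))
    (hg : MapsTo g (Icc (f A) (f B)) (Icc A B)) (hgf : ∀ y ∈ Icc A B, g (f y) = y)
    (hfg : ∀ x ∈ Icc (f A) (f B), f (g x) = x) {f' : ℝ → ℝ}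
    (hf' : ∀ t ∈ Ioo A B, HasDerivAt f (f' t) t ∧ f' t ≠ 0) {y : ℝ} (hy : y ∈ Ioo A B) :
    ∀ᶠ x in 𝓝 (f y), g x ∈ Ioo A B ∧ HasDerivAt g (f' (g x))⁻¹ x := by
  have hAB : A ≤ B := hy.1.le.trans hy.2.le
  have hfy : f y ∈ Ioo (f A) (f B) :=
    ⟨hf (left_mem_Icc.2 hAB) (Ioo_subset_Icc_self hy) hy.1,
      hf (Ioo_subset_Icc_self hy) (right_mem_Icc.2 hAB) hy.2⟩
  filter_upwards [isOpen_Ioo.mem_nhds hfy] with x hx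
  have hgx := mem_Ioo_of_rightInvOn hg hfg hx
  refine ⟨hgx, HasDerivAt.of_local_left_inverse (hf.continuousAt_of_invOn hg hgf hfg hx)
    (hf' _ hgx).1 (hf' _ hgx).2 ?_⟩
  filter_upwards [Icc_mem_nhds hx.1 hx.2] with z hz using hfg z hz

end InverseFunction

section QuarterPowers

variable {P R S : ℝ}

theorem rpow_neg_quarter_pow_four (hP : 0 ≤ P) : (P ^ (-(1 / 4) : ℝ)) ^ 4 = P⁻¹ := by
  rw [← Real.rpow_natCast, ← Real.rpow_mul hP]
  norm_num [Real.rpow_neg_one]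

theorem sqrt_div_eq_of_pow_four_eq (hP : 0 < P) (hR : 0 < R) (hS4 : S ^ 4 = (P * R)⁻¹) :
    √(R / P) = (P * S ^ 2)⁻¹ := by
  rw [Real.sqrt_eq_iff_eq_sq (by positivity) (by positivity), inv_pow, mul_pow, ← pow_mul, hS4]
  field_simp

theorem div_pow_three_rpow_quarter_eq (hP : 0 < P) (hR : 0 < R) (hS : 0 < S)
    (hS4 : S ^ 4 = (P * R)⁻¹) : (P / R ^ 3) ^ (1 / 4 : ℝ) = P * S ^ 3 := by
  have h : P / R ^ 3 = (P * S ^ 3) ^ 4 := by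
    rw [mul_pow, ← pow_mul, show 3 * 4 = 4 * 3 by rfl, pow_mul, hS4]
    field_simp
  rw [h, show (1 / 4 : ℝ) = ((4 : ℕ) : ℝ)⁻¹ by norm_num,
    Real.pow_rpow_inv_natCast (by positivity) (by norm_num)]

end QuarterPowers

theorem hasDerivAt_integral_of_continuousOn_Icc {E : Type*} [NormedAddCommGroup E]
    [NormedSpace ℝ E] [CompleteSpace E] {f : ℝ → E} {A B y₀ t : ℝ} (hf : ContinuousOn f (Icc A B))
    (hy₀ : y₀ ∈ Icc A B) (ht : t ∈ Ioo A B) :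
    HasDerivAt (fun y => ∫ s in y₀..y, f s) (f t) t :=
  have hf' : ∀ s ∈ Ioo A B, ContinuousAt f s :=
    fun _ hs => hf.continuousAt (Icc_mem_nhds hs.1 hs.2)
  intervalIntegral.integral_hasDerivAt_right
    ((hf.mono (uIcc_subset_Icc hy₀ (Ioo_subset_Icc_self ht))).intervalIntegrable)
    (ContinuousAt.stronglyMeasurableAtFilter isOpen_Ioo hf' t ht) (hf' t ht)

theorem hasDerivAt_integral_sqrt_div {p r : ℝ → ℝ} {A B y₀ t : ℝ}
    (hp : ContinuousOn p (Icc A B)) (hr : ContinuousOn r (Icc A B))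
    (hppos : ∀ y ∈ Icc A B, 0 < p y) (hrpos : ∀ y ∈ Icc A B, 0 < r y) (hy₀ : y₀ ∈ Icc A B)
    (ht : t ∈ Ioo A B) :
    HasDerivAt (fun y => ∫ s in y₀..y, √(r s / p s))
      (p t * ((p t * r t) ^ (-(1 / 4) : ℝ)) ^ 2)⁻¹ t := by
  have htI := Ioo_subset_Icc_self ht
  rw [← sqrt_div_eq_of_pow_four_eq (hppos t htI) (hrpos t htI)
    (rpow_neg_quarter_pow_four (mul_pos (hppos t htI) (hrpos t htI)).le)]
  exact hasDerivAt_integral_of_continuousOn_Icc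
    (hr.div hp fun s hs => (hppos s hs).ne').sqrt hy₀ ht

theorem ContDiffOn.hasDerivAt_deriv {F : Type*} [NormedAddCommGroup F] [NormedSpace ℝ F]
    {f : ℝ → F} {U : Set ℝ} {n : WithTop ℕ∞} {t : ℝ} (hf : ContDiffOn ℝ n f U) (hn : n ≠ 0)
    (hU : U ∈ 𝓝 t) : HasDerivAt f (deriv f t) t :=
  ((hf.contDiffAt hU).differentiableAt hn).hasDerivAt

theorem deriv_deriv_comp_eq_smul {E : Type*} [NormedAddCommGroup E] [NormedSpace ℝ E]
    {g k : ℝ → ℝ} {w h : ℝ → E} {x₀ : ℝ} {h' : E}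
    (hg : ∀ᶠ x in 𝓝 x₀, HasDerivAt g (k (g x)) x ∧ k (g x) ≠ 0)
    (hw : ∀ᶠ x in 𝓝 x₀, HasDerivAt w ((k (g x))⁻¹ • h (g x)) (g x))
    (hh : HasDerivAt h h' (g x₀)) :
    deriv (deriv (w ∘ g)) x₀ = k (g x₀) • h' := by
  have hderiv : deriv (w ∘ g) =ᶠ[𝓝 x₀] h ∘ g := by
    filter_upwards [hg, hw] with x ⟨hgx, hk⟩ hwx
    rw [(hwx.scomp x hgx).deriv, smul_inv_smul₀ hk, Function.comp_apply]
  rw [hderiv.deriv_eq, (hh.scomp x₀ hg.self_of_nhds.1).deriv]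

/-- For `V = p v'` and `P = p σ'` this is Lagrange's identity
`(σ (p v') - (p σ') v)' = σ (p v')' - (p σ')' v`; `hcross` is the cancellation of cross terms. -/
theorem HasDerivAt.mul_sub_mul_of_cross_eq {𝔸 : Type*} [NormedCommRing 𝔸] [NormedAlgebra ℝ 𝔸]
    {σ v P V : ℝ → 𝔸} {σ' v' P' V' : 𝔸} {t : ℝ} (hσ : HasDerivAt σ σ' t)
    (hv : HasDerivAt v v' t) (hP : HasDerivAt P P' t) (hV : HasDerivAt V V' t)
    (hcross : σ' * V t = P t * v') :
    HasDerivAt (fun s => σ s * V s - P s * v s) (σ t * V' - P' * v t) t := by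
  refine ((hσ.mul hV).sub (hP.mul hv)).congr_deriv ?_
  rw [hcross]; ring

theorem IsOpen.hasDerivAt_mul_deriv {p : ℝ → ℝ} {f : ℝ → ℂ} {U : Set ℝ} {t : ℝ}
    (hU : IsOpen U) (hp : ContDiffOn ℝ 2 p U) (hf : ContDiffOn ℝ 2 f U) (ht : t ∈ U) :
    HasDerivAt (fun s => (p s : ℂ) * deriv f s)
      (deriv p t * deriv f t + p t * deriv (deriv f) t) t :=
  ((hp.hasDerivAt_deriv two_ne_zero (hU.mem_nhds ht)).ofReal_comp).mul
    ((hf.deriv_of_isOpen hU (by norm_num)).hasDerivAt_deriv one_ne_zero (hU.mem_nhds ht))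

theorem ContDiffOn.deriv_deriv_comp_eq {p σ g : ℝ → ℝ} {v w : ℝ → ℂ} {U : Set ℝ} {x₀ y : ℝ}
    (hU : IsOpen U) (hp : ContDiffOn ℝ 2 p U) (hσ : ContDiffOn ℝ 2 σ U)
    (hv : ContDiffOn ℝ 2 v U) (hp0 : ∀ t ∈ U, p t ≠ 0) (hσ0 : ∀ t ∈ U, σ t ≠ 0)
    (hw : ∀ t ∈ U, w t = v t / σ t)
    (hg : ∀ᶠ x in 𝓝 x₀, g x ∈ U ∧ HasDerivAt g (p (g x) * σ (g x) ^ 2) x) (hgy : g x₀ = y) :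
    deriv (deriv (w ∘ g)) x₀ = p y * σ y ^ 2 * (σ y * (deriv p y * deriv v y +
      p y * deriv (deriv v) y) - deriv (fun t => p t * deriv σ t) y * v y) := by
  have hy : y ∈ U := hgy ▸ hg.self_of_nhds.1
  have hσd : ∀ t ∈ U, HasDerivAt σ (deriv σ t) t :=
    fun t ht => hσ.hasDerivAt_deriv two_ne_zero (hU.mem_nhds ht)
  set h : ℝ → ℂ := fun t => σ t * (p t * deriv v t) - ((p t * deriv σ t : ℝ) : ℂ) * v t
  have hwd : ∀ t ∈ U, HasDerivAt w ((p t * σ t ^ 2)⁻¹ • h t) t := by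
    intro t ht
    have hquot := (hv.hasDerivAt_deriv two_ne_zero (hU.mem_nhds ht)).div
      (hσd t ht).ofReal_comp (Complex.ofReal_ne_zero.2 (hσ0 t ht))
    refine (hquot.congr_of_eventuallyEq ?_).congr_deriv ?_
    · filter_upwards [hU.mem_nhds ht] with s hs using hw s hs
    · have : (p t : ℂ) ≠ 0 := Complex.ofReal_ne_zero.2 (hp0 t ht)
      have : (σ t : ℂ) ≠ 0 := Complex.ofReal_ne_zero.2 (hσ0 t ht)
      simp only [h, Complex.real_smul]
      push_cast
      field_simp
  have hh : HasDerivAt h (σ y * (deriv p y * deriv v y + p y * deriv (deriv v) y) -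
      deriv (fun t => p t * deriv σ t) y * v y) y := by
    have hpσ' : ContDiffOn ℝ 1 (fun t => p t * deriv σ t) U :=
      (hp.of_le one_le_two).mul (hσ.deriv_of_isOpen hU (by norm_num))
    refine (hσd y hy).ofReal_comp.mul_sub_mul_of_cross_eq
      (hv.hasDerivAt_deriv two_ne_zero (hU.mem_nhds hy))
      (hpσ'.hasDerivAt_deriv one_ne_zero (hU.mem_nhds hy)).ofReal_comp
      (hU.hasDerivAt_mul_deriv hp hv hy) ?_
    push_cast
    ring
  have := deriv_deriv_comp_eq_smul (k := fun t => p t * σ t ^ 2) (w := w) ?_ ?_ (hgy ▸ hh)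
  · rw [this, hgy, Complex.real_smul]
    push_cast
    ring
  · filter_upwards [hg] with x ⟨hx, hgx⟩
    exact ⟨hgx, mul_ne_zero (hp0 _ hx) (pow_ne_zero 2 (hσ0 _ hx))⟩
  · filter_upwards [hg] with x ⟨hx, _⟩ using hwd _ hx

theorem liouville_intertwining_relation_general
    (A B : ℝ)
    (p r : ℝ → ℝ) (q : ℝ → ℂ)
    (hp : ContDiffOn ℝ 2 p (Set.Icc A B))
    (hr : ContDiffOn ℝ 2 r (Set.Icc A B))
    (hppos : ∀ y ∈ Set.Icc A B, 0 < p y)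
    (hrpos : ∀ y ∈ Set.Icc A B, 0 < r y)
    (y₀ : ℝ) (hy₀ : y₀ ∈ Set.Icc A B)
    (l : ℝ → ℝ) (hl : ∀ y, l y = ∫ s in y₀..y, Real.sqrt (r s / p s))
    (ρ : ℝ → ℝ) (hρ : ∀ y, ρ y = (p y * r y) ^ (1 / 4 : ℝ))
    (a b : ℝ) (ha : a = l A) (hb : b = l B)
    (hmono : StrictMonoOn l (Set.Icc A B))
    (linv : ℝ → ℝ)
    (hlinv_maps : Set.MapsTo linv (Set.Icc a b) (Set.Icc A B))
    (hlinv_left : ∀ y ∈ Set.Icc A B, linv (l y) = y)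
    (hlinv_right : ∀ x ∈ Set.Icc a b, l (linv x) = x)
    (Q : ℝ → ℂ)
    (hQ : ∀ x, Q x = q (linv x) / (r (linv x) : ℂ) -
      (((p (linv x) / (r (linv x)) ^ 3) ^ (1 / 4 : ℝ) *
        deriv (fun t => p t * deriv (fun s => (p s * r s) ^ (-(1 / 4) : ℝ)) t) (linv x) : ℝ) : ℂ))
    (v : ℝ → ℂ) (hv : ContDiffOn ℝ 2 v (Set.Icc A B))
    (u : ℝ → ℂ) (hu : ∀ x, u x = (ρ (linv x) : ℂ) * v (linv x)) :
    ∀ y ∈ Set.Ioo A B,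
      -(deriv (deriv u) (l y)) + Q (l y) * u (l y) =
        -((ρ y : ℂ) / (r y : ℂ)) *
          ((p y : ℂ) * deriv (deriv v) y + (Complex.ofReal (deriv p y)) * deriv v y - q y * v y) := by
  intro y hy
  subst ha hb
  have hIoo : Ioo A B ⊆ Icc A B := Ioo_subset_Icc_self
  have hyI := hIoo hy
  set σ : ℝ → ℝ := fun s => (p s * r s) ^ (-(1 / 4) : ℝ)
  have hpr : ∀ t ∈ Icc A B, 0 < p t * r t := fun t ht => mul_pos (hppos t ht) (hrpos t ht)
  have hσpos : ∀ t ∈ Icc A B, 0 < σ t := fun t ht => Real.rpow_pos_of_pos (hpr t ht) _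
  have hσ4 : ∀ t ∈ Icc A B, σ t ^ 4 = (p t * r t)⁻¹ :=
    fun t ht => rpow_neg_quarter_pow_four (hpr t ht).le
  have hρσ : ∀ t ∈ Icc A B, ρ t = (σ t)⁻¹ := fun t ht => by
    simp only [σ]
    rw [hρ, Real.rpow_neg (hpr t ht).le, inv_inv]
  have hl' : ∀ t ∈ Ioo A B, HasDerivAt l (p t * σ t ^ 2)⁻¹ t ∧ (p t * σ t ^ 2)⁻¹ ≠ 0 :=
    fun t ht => ⟨funext hl ▸ hasDerivAt_integral_sqrt_div hp.continuousOn hr.continuousOn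
      hppos hrpos hy₀ ht, by simp [(hppos t (hIoo ht)).ne', (hσpos t (hIoo ht)).ne']⟩
  have hlinv := hmono.eventually_hasDerivAt_of_invOn hlinv_maps hlinv_left hlinv_right hl' hy
  simp only [inv_inv] at hlinv
  have hσC2 : ContDiffOn ℝ 2 σ (Ioo A B) :=
    ((hp.mul hr).rpow_const_of_ne fun t ht => (hpr t ht).ne').mono hIoo
  have hu'' := ContDiffOn.deriv_deriv_comp_eq (w := fun t => (ρ t : ℂ) * v t) isOpen_Ioo
    (hp.mono hIoo) hσC2 (hv.mono hIoo) (fun t ht => (hppos t (hIoo ht)).ne')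
    (fun t ht => (hσpos t (hIoo ht)).ne')
    (fun t ht => by rw [hρσ t (hIoo ht)]; push_cast; ring) hlinv (hlinv_left y hyI)
  rw [show u = (fun t => (ρ t : ℂ) * v t) ∘ linv from funext hu, hu'', hQ, Function.comp_apply,
    hlinv_left y hyI, div_pow_three_rpow_quarter_eq (hppos y hyI) (hrpos y hyI) (hσpos y hyI)
    (hσ4 y hyI), hρσ y hyI]
  have hp0 : (p y : ℂ) ≠ 0 := Complex.ofReal_ne_zero.2 (hppos y hyI).ne'
  have hσ0 : (σ y : ℂ) ≠ 0 := Complex.ofReal_ne_zero.2 (hσpos y hyI).ne'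
  have hrσ : (r y : ℂ) = ((p y : ℂ) * σ y ^ 4)⁻¹ := by
    rw [← Complex.ofReal_pow, hσ4 y hyI]
    push_cast
    field_simp
  rw [hrσ]
  push_cast
  field_simp
  ring

theorem liouville_intertwining_relation
    (A B : ℝ) (hAB : A < B)
    (p r : ℝ → ℝ) (q : ℝ → ℂ)
    (hp : ContDiffOn ℝ 2 p (Set.Icc A B))
    (hr : ContDiffOn ℝ 2 r (Set.Icc A B))
    (hq : ContinuousOn q (Set.Icc A B))
    (hppos : ∀ y ∈ Set.Icc A B, 0 < p y)
    (hrpos : ∀ y ∈ Set.Icc A B, 0 < r y)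
    (y₀ : ℝ) (hy₀ : y₀ ∈ Set.Icc A B)
    (l : ℝ → ℝ) (hl : ∀ y, l y = ∫ s in y₀..y, Real.sqrt (r s / p s))
    (ρ : ℝ → ℝ) (hρ : ∀ y, ρ y = (p y * r y) ^ (1 / 4 : ℝ))
    (a b : ℝ) (ha : a = l A) (hb : b = l B)
    (hmono : StrictMonoOn l (Set.Icc A B))
    (linv : ℝ → ℝ)
    (hlinv_maps : Set.MapsTo linv (Set.Icc a b) (Set.Icc A B))
    (hlinv_left : ∀ y ∈ Set.Icc A B, linv (l y) = y)
    (hlinv_right : ∀ x ∈ Set.Icc a b, l (linv x) = x)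
    (Q : ℝ → ℂ)
    (hQ : ∀ x, Q x = q (linv x) / (r (linv x) : ℂ) -
      (((p (linv x) / (r (linv x)) ^ 3) ^ (1 / 4 : ℝ) *
        deriv (fun t => p t * deriv (fun s => (p s * r s) ^ (-(1 / 4) : ℝ)) t) (linv x) : ℝ) : ℂ))
    (v : ℝ → ℂ) (hv : ContDiffOn ℝ 2 v (Set.Icc A B))
    (u : ℝ → ℂ) (hu : ∀ x, u x = (ρ (linv x) : ℂ) * v (linv x)) :
    ∀ y ∈ Set.Ioo A B,
      -(deriv (deriv u) (l y)) + Q (l y) * u (l y) =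
        -((ρ y : ℂ) / (r y : ℂ)) *
          ((p y : ℂ) * deriv (deriv v) y + (Complex.ofReal (deriv p y)) * deriv v y - q y * v y) :=
  liouville_intertwining_relation_general A B p r q hp hr hppos hrpos y₀ hy₀ l hl ρ hρ a b ha hb
    hmono linv hlinv_maps hlinv_left hlinv_right Q hQ v hv u hu
end

section
/- Let g : [A,B] → ℂ be continuous with g(y) ≠ 0 for all y, and set f(x) = ρ(l⁻¹(x)) g(l⁻¹(x)) for x ∈ [a,b]. Let X̃, X : ℕ → ([a,b] → ℂ) be defined by X̃⁽⁰⁾ = X⁽⁰⁾ ≡ 1, X̃⁽ⁿ⁾(x) = n ∫_{l(y₀)}^{x} X̃⁽ⁿ⁻¹⁾(s) (f²(s))^{(−1)^{n−1}} ds and X⁽ⁿ⁾(x) = n ∫_{l(y₀)}^{x} X⁽ⁿ⁻¹⁾(s) (f²(s))^{(−1)^{n}} ds, and let Ỹ, Y : ℕ → ([A,B] → ℂ) be defined by Ỹ⁽⁰⁾ = Y⁽⁰⁾ ≡ 1, Ỹ⁽ᵏ⁾(y) = k ∫_{y₀}^{y} Ỹ⁽ᵏ⁻¹⁾(s) g²(s)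 r(s) ds for odd k and Ỹ⁽ᵏ⁾(y) = k ∫_{y₀}^{y} Ỹ⁽ᵏ⁻¹⁾(s) / (g²(s) p(s)) ds for even k > 0, while Y⁽ᵏ⁾(y) = k ∫_{y₀}^{y} Y⁽ᵏ⁻¹⁾(s) / (g²(s) p(s)) ds for odd k and Y⁽ᵏ⁾(y) = k ∫_{y₀}^{y} Y⁽ᵏ⁻¹⁾(s) g²(s) r(s) ds for even k > 0. Then for every n ∈ ℕ and every y ∈ [A,B], Y⁽ⁿ⁾(y) = X⁽ⁿ⁾(l(y)) and Ỹ⁽ⁿ⁾(y) = X̃⁽ⁿ⁾(l(y)). -/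
/-!
The substitution `s = l t`, `ds = √(r t / p t) dt`, turns each recursion for `X`, `X̃` on `[a, b]`
into a recursion on `[A, B]` with weight `√(r/p) · (ρ g)^(±2)`; since `ρ² = √(p r)`, this weight
is `g² r` for the exponent `+1` and `1 / (g² p)` for `-1`, exactly the weights of `Y`, `Ỹ`.
Both sides then satisfy the same recursion from the same initial value, so they agree by
induction on `n`. The monotone substitution formula holds for every integrand (integrability
transfers along with it), so no regularity of the iterates has to be carried through the induction.
-/

open MeasureTheory Set intervalIntegral

theorem intervalIntegral_comp_smul_deriv_of_deriv_nonneg {E : Type*} [NormedAddCommGroup E]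
    [NormedSpace ℝ E] {f f' : ℝ → ℝ} {A B u v : ℝ} (hf : ContinuousOn f (Icc A B))
    (hff' : ∀ x ∈ Ioo A B, HasDerivAt f (f' x) x) (hf' : ∀ x ∈ Ioo A B, 0 ≤ f' x)
    (hu : u ∈ Icc A B) (hv : v ∈ Icc A B) (g : ℝ → E) :
    ∫ x in u..v, f' x • g (f x) = ∫ s in f u..f v, g s := by
  wlog huv : u ≤ v generalizing u v
  · rw [integral_symm, this hv hu (le_of_not_ge huv), integral_symm, neg_neg]
  have hmono : MonotoneOn f (Icc A B) := by
    refine monotoneOn_of_deriv_nonneg (convex_Icc A B) hf ?_ ?_ <;> rw [interior_Icc]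
    · exact fun x hx => (hff' x hx).differentiableAt.differentiableWithinAt
    · exact fun x hx => (hff' x hx).deriv ▸ hf' x hx
  have hIoo : Ioo u v ⊆ Ioo A B := Ioo_subset_Ioo hu.1 hv.2
  rw [integral_of_le huv, integral_of_le (hmono hu hv huv), ← integral_Icc_eq_integral_Ioc,
    ← integral_Icc_eq_integral_Ioc]
  exact integral_Icc_deriv_smul_of_deriv_nonneg (hf.mono (Icc_subset_Icc hu.1 hv.2))
    (fun x hx => hff' x (hIoo hx)) (fun x hx => hf' x (hIoo hx)) huv

section Primitive

variable {E : Type*} [NormedAddCommGroup E] [NormedSpace ℝ E] {φ : ℝ → E} {A B y₀ : ℝ}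

theorem ContinuousOn.continuousOn_primitive (hφ : ContinuousOn φ (Icc A B))
    (hy₀ : y₀ ∈ Icc A B) : ContinuousOn (fun y => ∫ s in y₀..y, φ s) (Icc A B) := by
  have hAB : A ≤ B := hy₀.1.trans hy₀.2
  rw [← uIcc_of_le hAB] at hφ hy₀ ⊢
  exact continuousOn_primitive_interval' hφ.intervalIntegrable hy₀

theorem ContinuousOn.hasDerivAt_primitive [CompleteSpace E] (hφ : ContinuousOn φ (Icc A B))
    (hy₀ : y₀ ∈ Icc A B) {x : ℝ} (hx : x ∈ Ioo A B) :
    HasDerivAt (fun y => ∫ s in y₀..y, φ s) (φ x) x :=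
  integral_hasDerivAt_right
    ((hφ.mono (uIcc_subset_Icc hy₀ (Ioo_subset_Icc_self hx))).intervalIntegrable)
    ((hφ.mono Ioo_subset_Icc_self).stronglyMeasurableAtFilter isOpen_Ioo x hx)
    (hφ.continuousAt (Icc_mem_nhds hx.1 hx.2))

theorem intervalIntegral_comp_primitive_smul {φ l : ℝ → ℝ} {A B y₀ u v : ℝ}
    (hφ : ContinuousOn φ (Icc A B)) (hφ0 : ∀ x ∈ Ioo A B, 0 ≤ φ x) (hy₀ : y₀ ∈ Icc A B)
    (hl : ∀ y, l y = ∫ s in y₀..y, φ s) (hu : u ∈ Icc A B) (hv : v ∈ Icc A B) (g : ℝ → E) :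
    ∫ x in u..v, φ x • g (l x) = ∫ s in l u..l v, g s := by
  obtain rfl : l = fun y => ∫ s in y₀..y, φ s := funext hl
  exact intervalIntegral_comp_smul_deriv_of_deriv_nonneg (hφ.continuousOn_primitive hy₀)
    (fun _ hx => hφ.hasDerivAt_primitive hy₀ hx) hφ0 hu hv g

end Primitive

section Weights

variable {p r : ℝ}

theorem rpow_one_div_four_sq {x : ℝ} (hx : 0 ≤ x) : (x ^ (1 / 4 : ℝ)) ^ 2 = √x := by
  rw [← Real.rpow_natCast, ← Real.rpow_mul hx, Real.sqrt_eq_rpow]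
  norm_num

theorem sqrt_div_mul_rpow_one_div_four_sq (hp : 0 < p) (hr : 0 < r) :
    √(r / p) * ((p * r) ^ (1 / 4 : ℝ)) ^ 2 = r := by
  rw [rpow_one_div_four_sq (by positivity), ← Real.sqrt_mul (by positivity),
    show r / p * (p * r) = r ^ 2 by field_simp, Real.sqrt_sq hr.le]

theorem sqrt_div_div_rpow_one_div_four_sq (hp : 0 < p) (hr : 0 < r) :
    √(r / p) / ((p * r) ^ (1 / 4 : ℝ)) ^ 2 = p⁻¹ := by
  rw [rpow_one_div_four_sq (by positivity), ← Real.sqrt_div' _ (by positivity),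
    show r / p / (p * r) = p⁻¹ ^ 2 by field_simp, Real.sqrt_sq (by positivity)]

theorem ofReal_sqrt_div_mul_zpow_neg_one_pow (hp : 0 < p) (hr : 0 < r) (z : ℂ) (m : ℕ) :
    (√(r / p) : ℂ) * (((((p * r) ^ (1 / 4 : ℝ) : ℝ) : ℂ) * z) ^ 2) ^ ((-1 : ℤ) ^ m) =
      if Even m then z ^ 2 * r else (z ^ 2 * p)⁻¹ := by
  have h₁ := congrArg Complex.ofReal (sqrt_div_mul_rpow_one_div_four_sq hp hr)
  have h₂ := congrArg Complex.ofReal (sqrt_div_div_rpow_one_div_four_sq hp hr)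
  push_cast at h₁ h₂
  rcases m.even_or_odd with hm | hm
  · rw [hm.neg_one_pow, zpow_one, if_pos hm, mul_pow, ← h₁]
    ring
  · rw [hm.neg_one_pow, zpow_neg_one, if_neg (Nat.not_even_iff_odd.2 hm), mul_pow, mul_inv,
      mul_inv, ← h₂]
    ring

end Weights

theorem integral_recursion_of_parity {U : ℕ → ℝ → ℂ} {P Q : ℝ → ℂ} {c : ℕ → ℂ} {S : Set ℝ}
    {y₀ : ℝ}
    (hodd : ∀ k, Odd (k + 1) → ∀ y ∈ S, U (k + 1) y = c k * ∫ s in y₀..y, U k s * P s)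
    (heven : ∀ k, Even (k + 1) → ∀ y ∈ S, U (k + 1) y = c k * ∫ s in y₀..y, U k s * Q s)
    (n : ℕ) {y : ℝ} (hy : y ∈ S) :
    U (n + 1) y = c n * ∫ s in y₀..y, U n s * if Even n then P s else Q s := by
  rcases n.even_or_odd with hn | hn
  · simp only [hodd n hn.add_one y hy, if_pos hn]
  · simp only [heven n hn.add_one y hy, if_neg (Nat.not_even_iff_odd.2 hn)]

theorem eqOn_comp_of_integral_recursion {U V w : ℕ → ℝ → ℂ} {c : ℕ → ℂ} {l : ℝ → ℝ}
    {S : Set ℝ} [hS : S.OrdConnected] {y₀ : ℝ} (hy₀ : y₀ ∈ S)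
    (h0 : ∀ y ∈ S, U 0 y = V 0 (l y))
    (hU : ∀ n, ∀ y ∈ S, U (n + 1) y = c n * ∫ t in y₀..y, U n t * w n t)
    (hV : ∀ n, ∀ y ∈ S, V (n + 1) (l y) = c n * ∫ t in y₀..y, V n (l t) * w n t) (n : ℕ) :
    EqOn (U n) (V n ∘ l) S := by
  induction n with
  | zero => exact h0
  | succ n ih =>
    intro y hy
    rw [hU n y hy, Function.comp_apply, hV n y hy]
    refine congrArg _ (integral_congr fun t ht => ?_)
    rw [ih (hS.uIcc_subset hy₀ hy ht), Function.comp_apply]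

theorem recursive_integrals_transform_general
    (A B : ℝ)
    (p r : ℝ → ℝ)
    (hp : ContinuousOn p (Set.Icc A B))
    (hr : ContinuousOn r (Set.Icc A B))
    (hppos : ∀ y ∈ Set.Icc A B, 0 < p y)
    (hrpos : ∀ y ∈ Set.Icc A B, 0 < r y)
    (y₀ : ℝ) (hy₀ : y₀ ∈ Set.Icc A B)
    (l : ℝ → ℝ) (hl : ∀ y, l y = ∫ s in y₀..y, Real.sqrt (r s / p s))
    (ρ : ℝ → ℝ) (hρ : ∀ y, ρ y = (p y * r y) ^ (1 / 4 : ℝ))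
    (a b : ℝ) (ha : a = l A) (hb : b = l B)
    (hmono : StrictMonoOn l (Set.Icc A B))
    (linv : ℝ → ℝ)
    (hlinv_left : ∀ y ∈ Set.Icc A B, linv (l y) = y)
    (g : ℝ → ℂ)
    (f : ℝ → ℂ) (hf : ∀ x, f x = (ρ (linv x) : ℂ) * g (linv x))
    (Xt X : ℕ → ℝ → ℂ) (Yt Y : ℕ → ℝ → ℂ)
    (hXt0 : ∀ x, Xt 0 x = 1) (hX0 : ∀ x, X 0 x = 1)
    (hXt : ∀ n : ℕ, ∀ x ∈ Set.Icc a b,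
      Xt (n + 1) x = ((n : ℂ) + 1) * ∫ s in (l y₀)..x, Xt n s * (f s ^ 2) ^ ((-1 : ℤ) ^ n))
    (hX : ∀ n : ℕ, ∀ x ∈ Set.Icc a b,
      X (n + 1) x = ((n : ℂ) + 1) * ∫ s in (l y₀)..x, X n s * (f s ^ 2) ^ ((-1 : ℤ) ^ (n + 1)))
    (hYt0 : ∀ y, Yt 0 y = 1) (hY0 : ∀ y, Y 0 y = 1)
    (hYt_odd : ∀ k : ℕ, Odd (k + 1) → ∀ y ∈ Set.Icc A B,
      Yt (k + 1) y = ((k : ℂ) + 1) * ∫ s in y₀..y, Yt k s * (g s ^ 2 * (r s : ℂ)))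
    (hYt_even : ∀ k : ℕ, Even (k + 1) → ∀ y ∈ Set.Icc A B,
      Yt (k + 1) y = ((k : ℂ) + 1) * ∫ s in y₀..y, Yt k s / (g s ^ 2 * (p s : ℂ)))
    (hY_odd : ∀ k : ℕ, Odd (k + 1) → ∀ y ∈ Set.Icc A B,
      Y (k + 1) y = ((k : ℂ) + 1) * ∫ s in y₀..y, Y k s / (g s ^ 2 * (p s : ℂ)))
    (hY_even : ∀ k : ℕ, Even (k + 1) → ∀ y ∈ Set.Icc A B,
      Y (k + 1) y = ((k : ℂ) + 1) * ∫ s in y₀..y, Y k s * (g s ^ 2 * (r s : ℂ))) :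
    ∀ n : ℕ, ∀ y ∈ Set.Icc A B, Y n y = X n (l y) ∧ Yt n y = Xt n (l y) := by
  subst ha hb
  have hφ : ContinuousOn (fun s => √(r s / p s)) (Icc A B) :=
    (hr.div hp fun y hy => (hppos y hy).ne').sqrt
  set ω : ℕ → ℝ → ℂ := fun m t => if Even m then g t ^ 2 * r t else (g t ^ 2 * p t)⁻¹
  have hX_subst : ∀ (V : ℕ → ℝ → ℂ) (e : ℕ → ℕ), (∀ n, ∀ x ∈ Icc (l A) (l B),
      V (n + 1) x = ((n : ℂ) + 1) * ∫ s in l y₀..x, V n s * (f s ^ 2) ^ ((-1 : ℤ) ^ e n)) →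
      ∀ n, ∀ y ∈ Icc A B, V (n + 1) (l y) = (n + 1) * ∫ t in y₀..y, V n (l t) * ω (e n) t := by
    intro V e hV n y hy
    rw [hV n (l y) (hmono.monotoneOn.mapsTo_Icc hy), ← intervalIntegral_comp_primitive_smul hφ
      (fun _ _ => Real.sqrt_nonneg _) hy₀ hl hy₀ hy]
    refine congrArg _ (integral_congr fun t ht => ?_)
    have ht := uIcc_subset_Icc hy₀ hy ht
    rw [Complex.real_smul, hf, hlinv_left t ht, hρ, mul_left_comm,
      ofReal_sqrt_div_mul_zpow_neg_one_pow (hppos t ht) (hrpos t ht)]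
  simp_rw [div_eq_mul_inv] at hY_odd hYt_even
  have hY_rec : ∀ n, ∀ y ∈ Icc A B, Y (n + 1) y = (n + 1) * ∫ t in y₀..y, Y n t * ω (n + 1) t :=
    fun n y hy => by
      simpa only [ω, Nat.even_add_one, ite_not] using
        integral_recursion_of_parity hY_odd hY_even n hy
  have hYt_rec : ∀ n, ∀ y ∈ Icc A B, Yt (n + 1) y = (n + 1) * ∫ t in y₀..y, Yt n t * ω n t :=
    fun n _ hy => integral_recursion_of_parity hYt_odd hYt_even n hy
  intro n y hy
  exact ⟨eqOn_comp_of_integral_recursion hy₀ (fun y _ => by rw [hY0, hX0]) hY_rec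
      (hX_subst X (· + 1) hX) n hy,
    eqOn_comp_of_integral_recursion hy₀ (fun y _ => by rw [hYt0, hXt0]) hYt_rec
      (hX_subst Xt id hXt) n hy⟩

theorem recursive_integrals_transform
    (A B : ℝ) (hAB : A < B)
    (p r : ℝ → ℝ)
    (hp : ContinuousOn p (Set.Icc A B))
    (hr : ContinuousOn r (Set.Icc A B))
    (hppos : ∀ y ∈ Set.Icc A B, 0 < p y)
    (hrpos : ∀ y ∈ Set.Icc A B, 0 < r y)
    (y₀ : ℝ) (hy₀ : y₀ ∈ Set.Icc A B)
    (l : ℝ → ℝ) (hl : ∀ y, l y = ∫ s in y₀..y, Real.sqrt (r s / p s))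
    (ρ : ℝ → ℝ) (hρ : ∀ y, ρ y = (p y * r y) ^ (1 / 4 : ℝ))
    (a b : ℝ) (ha : a = l A) (hb : b = l B)
    (hmono : StrictMonoOn l (Set.Icc A B))
    (linv : ℝ → ℝ)
    (hlinv_maps : Set.MapsTo linv (Set.Icc a b) (Set.Icc A B))
    (hlinv_left : ∀ y ∈ Set.Icc A B, linv (l y) = y)
    (hlinv_right : ∀ x ∈ Set.Icc a b, l (linv x) = x)
    (g : ℝ → ℂ) (hg : ContinuousOn g (Set.Icc A B))
    (hgne : ∀ y ∈ Set.Icc A B, g y ≠ 0)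
    (f : ℝ → ℂ) (hf : ∀ x, f x = (ρ (linv x) : ℂ) * g (linv x))
    (Xt X : ℕ → ℝ → ℂ) (Yt Y : ℕ → ℝ → ℂ)
    (hXt0 : ∀ x, Xt 0 x = 1) (hX0 : ∀ x, X 0 x = 1)
    (hXt : ∀ n : ℕ, ∀ x ∈ Set.Icc a b,
      Xt (n + 1) x = ((n : ℂ) + 1) * ∫ s in (l y₀)..x, Xt n s * (f s ^ 2) ^ ((-1 : ℤ) ^ n))
    (hX : ∀ n : ℕ, ∀ x ∈ Set.Icc a b,
      X (n + 1) x = ((n : ℂ) + 1) * ∫ s in (l y₀)..x, X n s * (f s ^ 2) ^ ((-1 : ℤ) ^ (n + 1)))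
    (hYt0 : ∀ y, Yt 0 y = 1) (hY0 : ∀ y, Y 0 y = 1)
    (hYt_odd : ∀ k : ℕ, Odd (k + 1) → ∀ y ∈ Set.Icc A B,
      Yt (k + 1) y = ((k : ℂ) + 1) * ∫ s in y₀..y, Yt k s * (g s ^ 2 * (r s : ℂ)))
    (hYt_even : ∀ k : ℕ, Even (k + 1) → ∀ y ∈ Set.Icc A B,
      Yt (k + 1) y = ((k : ℂ) + 1) * ∫ s in y₀..y, Yt k s / (g s ^ 2 * (p s : ℂ)))
    (hY_odd : ∀ k : ℕ, Odd (k + 1) → ∀ y ∈ Set.Icc A B,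
      Y (k + 1) y = ((k : ℂ) + 1) * ∫ s in y₀..y, Y k s / (g s ^ 2 * (p s : ℂ)))
    (hY_even : ∀ k : ℕ, Even (k + 1) → ∀ y ∈ Set.Icc A B,
      Y (k + 1) y = ((k : ℂ) + 1) * ∫ s in y₀..y, Y k s * (g s ^ 2 * (r s : ℂ))) :
    ∀ n : ℕ, ∀ y ∈ Set.Icc A B, Y n y = X n (l y) ∧ Yt n y = Xt n (l y) :=
  recursive_integrals_transform_general A B p r hp hr hppos hrpos y₀ hy₀ l hl ρ hρ a b ha hb hmono
    linv hlinv_left g f hf Xt X Yt Y hXt0 hX0 hXt hX hYt0 hY0 hYt_odd hYt_even hY_odd hY_even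
end

section
/- Let ω, h ∈ ℂ and let u : [a,b] → ℂ be twice continuously differentiable, satisfy u″(x) − Q(x) u(x) = −ω² u(x) for all x ∈ (a,b), and satisfy u(0) = 1, u′(0) = h. Then the function v₁(y) = u(l(y))/ρ(y) satisfies (p(y) v₁′(y))′ − q(y) v₁(y) = −ω² r(y) v₁(y) for all y ∈ (A,B), together with the initial conditions v₁(y₀) = 1/ρ(y₀) and v₁′(y₀) = −ρ′(y₀)/ρ(y₀)² + (h/ρ(y₀)) √(r(y₀)/p(y₀)). -/
open MeasureTheory

/-!
With `f = l' = √(r/p)` and `ρ = (pr)^{1/4}` one has `p f = ρ²`, `ρ² f = r` and `ρ f (p/r³)^{1/4} = 1`.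
For `v = u(l)/ρ` the first identity gives `p v' = ρ u'(l) + p (ρ⁻¹)' u(l)`; differentiating once more,
the `u'(l)` terms cancel (again because `p f = ρ²`), leaving `(p v')' = ρ f u''(l) + (p (ρ⁻¹)')' u(l)`.
Substituting `u'' = (Q - ω²) u` and the definition of `Q`, the other two identities turn this into
`(p v')' - q v = -ω² r v`.
-/

open Set Filter Topology

section RpowQuarter

variable {x P R : ℝ}

lemma rpow_quarter_pow_four (hx : 0 ≤ x) : (x ^ (1 / 4 : ℝ)) ^ 4 = x := by
  rw [← Real.rpow_natCast, ← Real.rpow_mul hx]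
  norm_num

lemma mul_sqrt_div_eq_rpow_quarter_sq (hP : 0 < P) (hR : 0 < R) :
    P * √(R / P) = ((P * R) ^ (1 / 4 : ℝ)) ^ 2 := by
  refine (pow_left_inj₀ (by positivity) (by positivity) two_ne_zero).1 ?_
  rw [mul_pow, Real.sq_sqrt (by positivity), ← pow_mul, rpow_quarter_pow_four (by positivity)]
  field_simp

lemma rpow_quarter_sq_mul_sqrt_div (hP : 0 < P) (hR : 0 < R) :
    ((P * R) ^ (1 / 4 : ℝ)) ^ 2 * √(R / P) = R := by
  rw [← mul_sqrt_div_eq_rpow_quarter_sq hP hR, mul_assoc, Real.mul_self_sqrt (by positivity)]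
  field_simp

lemma rpow_quarter_mul_sqrt_div_mul_rpow_quarter (hP : 0 < P) (hR : 0 < R) :
    (P * R) ^ (1 / 4 : ℝ) * √(R / P) * (P / R ^ 3) ^ (1 / 4 : ℝ) = 1 := by
  refine (pow_left_inj₀ (by positivity) zero_le_one four_ne_zero).1 ?_
  rw [one_pow, mul_pow, mul_pow, rpow_quarter_pow_four (by positivity),
    rpow_quarter_pow_four (by positivity), show 4 = 2 * 2 from rfl, pow_mul,
    Real.sq_sqrt (by positivity)]
  field_simp

end RpowQuarter

lemma ContDiffOn.differentiableAt_deriv {𝕜 F : Type*} [NontriviallyNormedField 𝕜]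
    [NormedAddCommGroup F] [NormedSpace 𝕜 F] {f : 𝕜 → F} {s : Set 𝕜} {x : 𝕜}
    (hf : ContDiffOn 𝕜 2 f s) (hs : IsOpen s) (hx : x ∈ s) :
    DifferentiableAt 𝕜 (deriv f) x :=
  ((hf.deriv_of_isOpen hs (by norm_num)).differentiableOn one_ne_zero).differentiableAt
    (hs.mem_nhds hx)

lemma hasDerivAt_integral_of_continuousOn {f : ℝ → ℝ} {A B y₀ t : ℝ}
    (hf : ContinuousOn f (Icc A B)) (hy₀ : y₀ ∈ Icc A B) (ht : t ∈ Ioo A B) :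
    HasDerivAt (fun y => ∫ s in y₀..y, f s) (f t) t :=
  intervalIntegral.integral_hasDerivAt_right
    ((hf.mono (uIcc_subset_Icc hy₀ (Ioo_subset_Icc_self ht))).intervalIntegrable)
    ((hf.mono Ioo_subset_Icc_self).stronglyMeasurableAtFilter isOpen_Ioo t ht)
    ((hf.mono Ioo_subset_Icc_self).continuousAt (Ioo_mem_nhds ht.1 ht.2))

lemma hasDerivAt_comp_div_ofReal {u : ℝ → ℂ} {l ρ : ℝ → ℝ} {u' : ℂ} {l' ρ' t : ℝ}
    (hu : HasDerivAt u u' (l t)) (hl : HasDerivAt l l' t) (hρ : HasDerivAt ρ ρ' t)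
    (hρ0 : ρ t ≠ 0) :
    HasDerivAt (fun s => u (l s) / ρ s)
      ((l' * u' * ρ t - u (l t) * ρ') / (ρ t : ℂ) ^ 2) t := by
  have h := (hu.scomp t hl).fun_div hρ.ofReal_comp (Complex.ofReal_ne_zero.2 hρ0)
  rw [Complex.real_smul] at h
  exact h

section LiouvilleTransform

variable {U : Set ℝ} {y : ℝ} {p ρ l f : ℝ → ℝ} {u : ℝ → ℂ}

theorem deriv_mul_deriv_comp_div (hU : IsOpen U) (hy : y ∈ U)
    (hl : ∀ t ∈ U, HasDerivAt l (f t) t)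
    (hρ : ∀ t ∈ U, DifferentiableAt ℝ ρ t) (hρ0 : ∀ t ∈ U, ρ t ≠ 0)
    (hpf : ∀ t ∈ U, p t * f t = ρ t ^ 2)
    (hu : ∀ t ∈ U, DifferentiableAt ℝ u (l t))
    (hu' : DifferentiableAt ℝ (deriv u) (l y))
    (hG : DifferentiableAt ℝ (fun t => p t * deriv (fun s => (ρ s)⁻¹) t) y) :
    deriv (fun t => (p t : ℂ) * deriv (fun s => u (l s) / ρ s) t) y =
      ρ y * f y * deriv (deriv u) (l y) +
        deriv (fun t => p t * deriv (fun s => (ρ s)⁻¹) t) y * u (l y) := by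
  set G := fun t => p t * deriv (fun s => (ρ s)⁻¹) t
  have hG_eq : ∀ t ∈ U, G t = -(p t * deriv ρ t / ρ t ^ 2) := fun t ht => by
    simp only [G, deriv_fun_inv'' (hρ t ht) (hρ0 t ht)]
    ring
  have hflux : (fun t => (p t : ℂ) * deriv (fun s => u (l s) / ρ s) t) =ᶠ[𝓝 y]
      fun t => ρ t * deriv u (l t) + G t * u (l t) := by
    filter_upwards [hU.mem_nhds hy] with t ht
    have hpf' : (p t : ℂ) * f t = ρ t ^ 2 := mod_cast hpf t ht
    have hρ0' : (ρ t : ℂ) ≠ 0 := mod_cast hρ0 t ht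
    rw [(hasDerivAt_comp_div_ofReal (hu t ht).hasDerivAt (hl t ht) (hρ t ht).hasDerivAt
      (hρ0 t ht)).deriv, hG_eq t ht]
    push_cast
    field_simp
    linear_combination (deriv u (l t) * ρ t) * hpf'
  have hderiv := ((hρ y hy).hasDerivAt.ofReal_comp.fun_mul
    (hu'.hasDerivAt.scomp y (hl y hy))).fun_add
    (hG.hasDerivAt.ofReal_comp.fun_mul ((hu y hy).hasDerivAt.scomp y (hl y hy)))
  simp only [Function.comp_apply, Complex.real_smul] at hderiv
  have hpf' : (p y : ℂ) * f y = ρ y ^ 2 := mod_cast hpf y hy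
  have hρ0' : (ρ y : ℂ) ≠ 0 := mod_cast hρ0 y hy
  rw [hflux.deriv_eq, hderiv.deriv, hG_eq y hy]
  push_cast
  field_simp
  linear_combination (-((deriv ρ y : ℝ) : ℂ) * deriv u (l y)) * hpf'

theorem sturmLiouville_comp_div {r : ℝ → ℝ} {q : ℝ → ℂ} {E : ℝ} {ω : ℂ}
    (hU : IsOpen U) (hy : y ∈ U) (hl : ∀ t ∈ U, HasDerivAt l (f t) t)
    (hρ : ContDiffOn ℝ 2 ρ U) (hρ0 : ∀ t ∈ U, ρ t ≠ 0) (hp : DifferentiableAt ℝ p y)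
    (hpf : ∀ t ∈ U, p t * f t = ρ t ^ 2) (hρf : ρ y ^ 2 * f y = r y) (hE : ρ y * f y * E = 1)
    (hu : ∀ t ∈ U, DifferentiableAt ℝ u (l t)) (hu' : DifferentiableAt ℝ (deriv u) (l y))
    (hu'' : deriv (deriv u) (l y) = (q y / r y -
      (E * deriv (fun t => p t * deriv (fun s => (ρ s)⁻¹) t) y : ℝ) - ω ^ 2) * u (l y)) :
    deriv (fun t => (p t : ℂ) * deriv (fun s => u (l s) / ρ s) t) y - q y * (u (l y) / ρ y) =
      -ω ^ 2 * r y * (u (l y) / ρ y) := by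
  have hG : DifferentiableAt ℝ (fun t => p t * deriv (fun s => (ρ s)⁻¹) t) y :=
    hp.mul ((hρ.inv hρ0).differentiableAt_deriv hU hy)
  have hρ_diff : ∀ t ∈ U, DifferentiableAt ℝ ρ t := fun t ht =>
    (hρ.differentiableOn two_ne_zero).differentiableAt (hU.mem_nhds ht)
  rw [deriv_mul_deriv_comp_div hU hy hl hρ_diff hρ0 hpf hu hu' hG, hu'']
  set G := deriv (fun t => p t * deriv (fun s => (ρ s)⁻¹) t) y
  have hρ0' : (ρ y : ℂ) ≠ 0 := mod_cast hρ0 y hy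
  have hr0 : (r y : ℂ) ≠ 0 := by
    rw [← hρf]
    exact_mod_cast mul_ne_zero (pow_ne_zero 2 (hρ0 y hy))
      (right_ne_zero_of_mul (left_ne_zero_of_mul_eq_one hE))
  have hρf' : (ρ y : ℂ) ^ 2 * f y = r y := mod_cast hρf
  have hE' : (ρ y : ℂ) * f y * E = 1 := mod_cast hE
  push_cast
  field_simp
  linear_combination (u (l y) * q y - u (l y) * r y * ω ^ 2) * hρf' -
    (u (l y) * r y * G * ρ y) * hE'

lemma deriv_mul_deriv_rpow_neg_quarter {r : ℝ → ℝ} (hU : IsOpen U) (hy : y ∈ U)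
    (hpr : ∀ t ∈ U, 0 ≤ p t * r t) (hρ : ∀ t ∈ U, ρ t = (p t * r t) ^ (1 / 4 : ℝ)) :
    deriv (fun t => p t * deriv (fun s => (p s * r s) ^ (-(1 / 4) : ℝ)) t) y =
      deriv (fun t => p t * deriv (fun s => (ρ s)⁻¹) t) y := by
  have hw : EqOn (fun s => (p s * r s) ^ (-(1 / 4) : ℝ)) (fun s => (ρ s)⁻¹) U :=
    fun t ht => by simp only [hρ t ht, Real.rpow_neg (hpr t ht)]
  exact EqOn.deriv (fun t ht => congrArg (p t * ·) (hw.deriv hU ht)) hU hy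

end LiouvilleTransform

theorem transformed_cosine_type_solution_general
    (A B : ℝ)
    (p r : ℝ → ℝ) (q : ℝ → ℂ)
    (hp : ContDiffOn ℝ 2 p (Set.Icc A B))
    (hr : ContDiffOn ℝ 2 r (Set.Icc A B))
    (hppos : ∀ y ∈ Set.Icc A B, 0 < p y)
    (hrpos : ∀ y ∈ Set.Icc A B, 0 < r y)
    (y₀ : ℝ) (hy₀ : y₀ ∈ Set.Ioo A B)
    (l : ℝ → ℝ) (hl : ∀ y, l y = ∫ s in y₀..y, Real.sqrt (r s / p s))
    (ρ : ℝ → ℝ) (hρ : ∀ y, ρ y = (p y * r y) ^ (1 / 4 : ℝ))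
    (a b : ℝ) (ha : a = l A) (hb : b = l B)
    (hmono : StrictMonoOn l (Set.Icc A B))
    (linv : ℝ → ℝ)
    (hlinv_left : ∀ y ∈ Set.Icc A B, linv (l y) = y)
    (Q : ℝ → ℂ)
    (hQ : ∀ x, Q x = q (linv x) / (r (linv x) : ℂ) -
      (((p (linv x) / (r (linv x)) ^ 3) ^ (1 / 4 : ℝ) *
        deriv (fun t => p t * deriv (fun s => (p s * r s) ^ (-(1 / 4) : ℝ)) t) (linv x) : ℝ) : ℂ))
    (ω h : ℂ)
    (u : ℝ → ℂ) (hu : ContDiffOn ℝ 2 u (Set.Icc a b))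
    (hueq : ∀ x ∈ Set.Ioo a b, deriv (deriv u) x - Q x * u x = -ω ^ 2 * u x)
    (hu0 : u 0 = 1) (hu'0 : deriv u 0 = h)
    (v₁ : ℝ → ℂ) (hv₁ : ∀ y, v₁ y = u (l y) / (ρ y : ℂ)) :
    (∀ y ∈ Set.Ioo A B,
        deriv (fun t => (p t : ℂ) * deriv v₁ t) y - q y * v₁ y = -ω ^ 2 * (r y : ℂ) * v₁ y) ∧
      v₁ y₀ = 1 / (ρ y₀ : ℂ) ∧
      deriv v₁ y₀ = -Complex.ofReal (deriv ρ y₀) / (ρ y₀ : ℂ) ^ 2 +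
        h / (ρ y₀ : ℂ) * (Real.sqrt (r y₀ / p y₀) : ℂ) := by
  obtain rfl : v₁ = fun y => u (l y) / (ρ y : ℂ) := funext hv₁
  have hsub : Ioo A B ⊆ Icc A B := Ioo_subset_Icc_self
  have hpr : ∀ t ∈ Ioo A B, 0 < p t * r t := fun t ht =>
    mul_pos (hppos t (hsub ht)) (hrpos t (hsub ht))
  have hρ_cd : ContDiffOn ℝ 2 ρ (Ioo A B) :=
    (((hp.mul hr).mono hsub).rpow_const_of_ne fun t ht => (hpr t ht).ne').congr fun t _ => hρ t
  have hρ_pos : ∀ t ∈ Ioo A B, 0 < ρ t := fun t ht => hρ t ▸ Real.rpow_pos_of_pos (hpr t ht) _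
  have hl_deriv : ∀ t ∈ Ioo A B, HasDerivAt l (√(r t / p t)) t := fun t ht => by
    rw [show l = _ from funext hl]
    exact hasDerivAt_integral_of_continuousOn
      ((hr.continuousOn.div hp.continuousOn fun s hs => (hppos s hs).ne').sqrt) (hsub hy₀) ht
  have hl_mem : MapsTo l (Ioo A B) (Ioo a b) := ha ▸ hb ▸ hmono.mapsTo_Ioo
  have hu_diff : ∀ t ∈ Ioo A B, DifferentiableAt ℝ u (l t) := fun t ht =>
    (hu.differentiableOn two_ne_zero).differentiableAt (Icc_mem_nhds (hl_mem ht).1 (hl_mem ht).2)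
  have hl₀ : l y₀ = 0 := by rw [hl, intervalIntegral.integral_same]
  refine ⟨fun y hy => ?_, by simp [hl₀, hu0], ?_⟩
  · have hpy := hppos y (hsub hy)
    have hry := hrpos y (hsub hy)
    have hQy : Q (l y) = q y / r y -
        ((p y / r y ^ 3) ^ (1 / 4 : ℝ) * deriv (fun t => p t * deriv (fun s => (ρ s)⁻¹) t) y : ℝ) := by
      rw [hQ, hlinv_left y (hsub hy),
        deriv_mul_deriv_rpow_neg_quarter isOpen_Ioo hy (fun t ht => (hpr t ht).le) fun t _ => hρ t]
    refine sturmLiouville_comp_div isOpen_Ioo hy hl_deriv hρ_cd (fun t ht => (hρ_pos t ht).ne')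
      ((hp.differentiableOn two_ne_zero).differentiableAt (Icc_mem_nhds hy.1 hy.2))
      (fun t ht => by rw [hρ, mul_sqrt_div_eq_rpow_quarter_sq (hppos t (hsub ht)) (hrpos t (hsub ht))])
      (by rw [hρ]; exact rpow_quarter_sq_mul_sqrt_div hpy hry)
      (by rw [hρ]; exact rpow_quarter_mul_sqrt_div_mul_rpow_quarter hpy hry) hu_diff
      ((hu.mono Ioo_subset_Icc_self).differentiableAt_deriv isOpen_Ioo (hl_mem hy))
      (by linear_combination hueq _ (hl_mem hy) + u (l y) * hQy)
  · rw [(hasDerivAt_comp_div_ofReal (hu_diff y₀ hy₀).hasDerivAt (hl_deriv y₀ hy₀)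
      (hρ_cd.differentiableOn two_ne_zero |>.differentiableAt (Ioo_mem_nhds hy₀.1 hy₀.2)).hasDerivAt
      (hρ_pos y₀ hy₀).ne').deriv, hl₀, hu0, hu'0]
    have := (hρ_pos y₀ hy₀).ne'
    field_simp
    ring

theorem transformed_cosine_type_solution
    (A B : ℝ) (hAB : A < B)
    (p r : ℝ → ℝ) (q : ℝ → ℂ)
    (hp : ContDiffOn ℝ 2 p (Set.Icc A B))
    (hr : ContDiffOn ℝ 2 r (Set.Icc A B))
    (hq : ContinuousOn q (Set.Icc A B))
    (hppos : ∀ y ∈ Set.Icc A B, 0 < p y)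
    (hrpos : ∀ y ∈ Set.Icc A B, 0 < r y)
    (y₀ : ℝ) (hy₀ : y₀ ∈ Set.Ioo A B)
    (l : ℝ → ℝ) (hl : ∀ y, l y = ∫ s in y₀..y, Real.sqrt (r s / p s))
    (ρ : ℝ → ℝ) (hρ : ∀ y, ρ y = (p y * r y) ^ (1 / 4 : ℝ))
    (a b : ℝ) (ha : a = l A) (hb : b = l B)
    (hmono : StrictMonoOn l (Set.Icc A B))
    (linv : ℝ → ℝ)
    (hlinv_maps : Set.MapsTo linv (Set.Icc a b) (Set.Icc A B))
    (hlinv_left : ∀ y ∈ Set.Icc A B, linv (l y) = y)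
    (hlinv_right : ∀ x ∈ Set.Icc a b, l (linv x) = x)
    (Q : ℝ → ℂ)
    (hQ : ∀ x, Q x = q (linv x) / (r (linv x) : ℂ) -
      (((p (linv x) / (r (linv x)) ^ 3) ^ (1 / 4 : ℝ) *
        deriv (fun t => p t * deriv (fun s => (p s * r s) ^ (-(1 / 4) : ℝ)) t) (linv x) : ℝ) : ℂ))
    (ω h : ℂ)
    (u : ℝ → ℂ) (hu : ContDiffOn ℝ 2 u (Set.Icc a b))
    (hueq : ∀ x ∈ Set.Ioo a b, deriv (deriv u) x - Q x * u x = -ω ^ 2 * u x)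
    (hu0 : u 0 = 1) (hu'0 : deriv u 0 = h)
    (v₁ : ℝ → ℂ) (hv₁ : ∀ y, v₁ y = u (l y) / (ρ y : ℂ)) :
    (∀ y ∈ Set.Ioo A B,
        deriv (fun t => (p t : ℂ) * deriv v₁ t) y - q y * v₁ y = -ω ^ 2 * (r y : ℂ) * v₁ y) ∧
      v₁ y₀ = 1 / (ρ y₀ : ℂ) ∧
      deriv v₁ y₀ = -Complex.ofReal (deriv ρ y₀) / (ρ y₀ : ℂ) ^ 2 +
        h / (ρ y₀ : ℂ) * (Real.sqrt (r y₀ / p y₀) : ℂ) :=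
  transformed_cosine_type_solution_general A B p r q hp hr hppos hrpos y₀ hy₀ l hl ρ hρ a b ha hb
    hmono linv hlinv_left Q hQ ω h u hu hueq hu0 hu'0 v₁ hv₁
end
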